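/- arXiv:2001.11647 — 2 statements merged into one kernel-verified Lean document; each statement's English description precedes it below -/
import Mathlib

section
/- For every integer vector v = (v_1,…,v_r) with 0 ≤ v_r < v_{r−1} < ⋯ < v_1 < r+k, one has Σ_{μ∈P̄_k} S_μ(ζ_v)·conj(S_μ(ζ_v)) = (r+k)^r / D(v). -/
open scoped BigOperators
open Complex

noncomputable section

namespace VerlindePaper

/-- The Schur value `S_λ(z₁,…,z_r) = det(z_j^{λ_i+r-i}) / det(z_j^{r-i})`
(indices `i` are 0-based, so the exponent is `λ i + (r - 1 - i)`). -/
noncomputable def schur {r : ℕ} (lam : Fin r → ℤ) (z : Fin r → ℂ) : ℂ :=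
  Matrix.det (Matrix.of fun i j : Fin r => z j ^ (lam i + ((r : ℤ) - 1 - (i : ℕ)))) /
    Matrix.det (Matrix.of fun i j : Fin r => z j ^ ((r : ℤ) - 1 - (i : ℕ)))

/-- `ζ_v = (e^{2πi v_1/(r+k)}, …, e^{2πi v_r/(r+k)})`. -/
noncomputable def zeta (r k : ℕ) (v : Fin r → ℤ) : Fin r → ℂ :=
  fun j => Complex.exp (2 * (Real.pi : ℂ) * Complex.I * (v j : ℂ) / ((r : ℂ) + (k : ℂ)))

/-- `D(v) = ∏_{i<j} (2 sin(π(v_i - v_j)/(r+k)))²`. -/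
noncomputable def Dv (r k : ℕ) (v : Fin r → ℤ) : ℝ :=
  ∏ p ∈ Finset.univ.filter (fun p : Fin r × Fin r => p.1 < p.2),
    (2 * Real.sin (Real.pi * ((v p.1 : ℝ) - (v p.2 : ℝ)) / ((r : ℝ) + (k : ℝ)))) ^ 2

/-- `P̄_k = {μ : 0 ≤ μ_r ≤ ⋯ ≤ μ_1 ≤ k}` (0-based: `μ 0 = μ_1`). -/
def Pbar (r k : ℕ) : Finset (Fin r → ℤ) :=
  (Finset.Icc 0 (fun _ => (k : ℤ))).filter (fun μ => ∀ i j : Fin r, i ≤ j → μ j ≤ μ i)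

/-- `P_k = {μ : 0 ≤ μ_r ≤ ⋯ ≤ μ_1 ≤ k-1}`. -/
def Pk (r k : ℕ) : Finset (Fin r → ℤ) :=
  (Finset.Icc 0 (fun _ => (k : ℤ) - 1)).filter (fun μ => ∀ i j : Fin r, i ≤ j → μ j ≤ μ i)

/-- `W_k = {μ ∈ P̄_k : μ_r = 0}`. -/
def Wk (r k : ℕ) : Finset (Fin r → ℤ) :=
  (Pbar r k).filter (fun μ => ∀ i : Fin r, (i : ℕ) = r - 1 → μ i = 0)

/-- `μ* = (k - μ_r, k - μ_{r-1}, …, k - μ_1)`. -/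
def mustar (k : ℕ) {r : ℕ} (μ : Fin r → ℤ) : Fin r → ℤ :=
  fun i => (k : ℤ) - μ i.rev

/-- `μ ∼ ν` iff `μ - ν` is a constant vector. -/
def sim {r : ℕ} (μ ν : Fin r → ℤ) : Prop := ∃ a : ℤ, ∀ i, μ i = ν i + a

/-- The index set of the Verlinde sums: integer vectors with
`0 = v_r < v_{r-1} < ⋯ < v_1 < r + k`. -/
def Vset (r k : ℕ) : Finset (Fin r → ℤ) :=
  (Finset.Icc 0 (fun _ => (r : ℤ) + (k : ℤ) - 1)).filter
    (fun v => (∀ i j : Fin r, i < j → v j < v i) ∧ ∀ i : Fin r, (i : ℕ) = r - 1 → v i = 0)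

/-- The Verlinde number `V_g(r,d,(λ_x)_{x∈I})`. -/
noncomputable def verlinde (r k : ℕ) (g : ℕ) (d : ℤ) {I : Type*} [Fintype I]
    (lam : I → Fin r → ℤ) : ℂ :=
  (-1 : ℂ) ^ (d * ((r : ℤ) - 1)) * ((k : ℂ) / (r : ℂ)) ^ g *
    ((r : ℂ) * ((r : ℂ) + (k : ℂ)) ^ (r - 1)) ^ ((g : ℤ) - 1) *
    ∑ v ∈ Vset r k,
      Complex.exp (2 * (Real.pi : ℂ) * Complex.I *
          ((d : ℂ) / (r : ℂ) -
            (∑ x, ∑ i, (lam x i : ℂ)) / ((r : ℂ) * ((r : ℂ) + (k : ℂ)))) *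
          (∑ i, (v i : ℂ))) *
        (∏ x, schur (lam x) (zeta r k v)) * ((Dv r k v : ℂ)) ^ (1 - (g : ℤ))

/-- The Hecke transformation
`H¹(μ) = (k - μ_{r-1} + μ_r, μ_1 - μ_{r-1}, …, μ_{r-2} - μ_{r-1}, 0)`. -/
def H1 (k : ℕ) {r : ℕ} (μ : Fin r → ℤ) : Fin r → ℤ := fun j =>
  have hj : (j : ℕ) < r := j.isLt
  if (j : ℕ) = 0 then (k : ℤ) - μ ⟨r - 2, by omega⟩ + μ ⟨r - 1, by omega⟩
  else μ ⟨(j : ℕ) - 1, by omega⟩ - μ ⟨r - 2, by omega⟩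

/-- The iterated Hecke transformation `H^m = H¹ ∘ ⋯ ∘ H¹`. -/
def Hm (k : ℕ) {r : ℕ} (m : ℕ) (μ : Fin r → ℤ) : Fin r → ℤ := (H1 k)^[m] μ

/-- `μ ∈ Y(λ, ω_s)`: `μ` is a partition obtained from `λ` by adding `s` boxes,
no two in the same row. -/
def inY {r : ℕ} (lam : Fin r → ℤ) (s : ℕ) (μ : Fin r → ℤ) : Prop :=
  (∀ i j : Fin r, i ≤ j → μ j ≤ μ i) ∧ (∀ i, μ i - lam i = 0 ∨ μ i - lam i = 1) ∧
    (∑ i, μ i) = (∑ i, lam i) + (s : ℤ)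

/-- The Vandermonde product `Δ(z) = ∏_{i<j} (z_i - z_j)`. -/
noncomputable def vand {r : ℕ} (z : Fin r → ℂ) : ℂ :=
  ∏ p ∈ Finset.univ.filter (fun p : Fin r × Fin r => p.1 < p.2), (z p.1 - z p.2)

/-- `J_v(t) = Σ_{τ ∈ S_r} sgn(τ) exp(2πi (Σ_j v_{τ(j)} t_j)/(r+k))`. -/
noncomputable def Jv (r k : ℕ) (v : Fin r → ℤ) (t : Fin r → Fin (r + k)) : ℂ :=
  ∑ τ : Equiv.Perm (Fin r), ((Equiv.Perm.sign τ : ℤ) : ℂ) *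
    Complex.exp (2 * (Real.pi : ℂ) * Complex.I *
      (∑ j, (v (τ j) : ℂ) * ((t j : ℕ) : ℂ)) / ((r : ℂ) + (k : ℂ)))


/-!
With the staircase `δ = (r - 1, …, 1, 0)` and the alternant `a_e(z) = det (z_j ^ e_i)`, the
Schur value is `a_{μ+δ}(ζ_v) / a_δ(ζ_v)`, and `μ ↦ μ + δ` identifies `P̄_k` with the strictly
decreasing maps `Fin r → Fin (r + k)`. By Cauchy–Binet, the sum of `|a_{μ+δ}(ζ_v)|²` over these
maps is the Gram determinant `det (∑_{t < r + k} (ζ_a conj ζ_b)^t)`. For `a ≠ b`, `ζ_a conj ζ_b`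
is a nontrivial `(r + k)`-th root of unity, so the Gram matrix is `(r + k) • 1`. Finally `a_δ` is
the Vandermonde product, and `|ζ_a - ζ_b|² = (2 sin (π (v_a - v_b) / (r + k)))²`.
-/

open Finset ComplexConjugate

theorem _root_.Finset.sum_univ_eq_sum_strictAnti_sum_perm {α M : Type*} [LinearOrder α]
    [Fintype α] [AddCommMonoid M] {n : ℕ} (F : (Fin n → α) → M)
    (hF : ∀ f, ¬ Function.Injective f → F f = 0) :
    ∑ f, F f = ∑ g ∈ univ.filter (fun g : Fin n → α => StrictAnti g),
      ∑ σ : Equiv.Perm (Fin n), F (g ∘ σ) := by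
  classical
  let sort (f : Fin n → α) : Equiv.Perm (Fin n) := Tuple.sort (OrderDual.toDual ∘ f)
  have hsort (f : Fin n → α) : Antitone (f ∘ sort f) :=
    fun i j hij => Tuple.monotone_sort (OrderDual.toDual ∘ f) hij
  have hsort_comp {g : Fin n → α} (hg : StrictAnti g) (σ : Equiv.Perm (Fin n)) :
      sort (g ∘ σ) = σ⁻¹ := by
    refine (Tuple.eq_sort_iff.2 ⟨fun i j hij => ?_, fun i j hij h => ?_⟩).symm
    · simpa using hg.antitone hij
    · exact absurd (hg.injective (by simpa using h)) hij.ne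
  rw [← sum_filter_of_ne (p := Function.Injective) fun f _ h => by_contra fun hf => h (hF f hf),
    ← sum_product']
  refine sum_nbij' (fun f => (f ∘ sort f, (sort f)⁻¹)) (fun p => p.1 ∘ p.2) ?_ ?_ ?_ ?_ ?_
  · intro f hf
    simp only [mem_filter, mem_product, mem_univ, true_and, and_true] at hf ⊢
    exact (hsort f).strictAnti_of_injective (hf.comp (sort f).injective)
  · intro p hp
    simp only [mem_filter, mem_product, mem_univ, true_and, and_true] at hp ⊢
    exact hp.injective.comp p.2.injective
  · intro f _
    ext i
    simp
  · rintro ⟨g, σ⟩ hp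
    simp only [mem_filter, mem_product, mem_univ, true_and, and_true] at hp
    simp [hsort_comp hp, Function.comp_assoc]
  · intro f _
    simp [Function.comp_assoc]

open Matrix in
/-- The Cauchy–Binet formula, with the `n`-subsets of `α` enumerated decreasingly. -/
theorem _root_.Matrix.det_transpose_mul_eq_sum_strictAnti {α R : Type*} [LinearOrder α]
    [Fintype α] [CommRing R] {n : ℕ} (U W : Matrix α (Fin n) R) :
    (Uᵀ * W).det = ∑ g ∈ univ.filter (fun g : Fin n → α => StrictAnti g),
      (U.submatrix g id).det * (W.submatrix g id).det := by
  have expand : (Uᵀ * W).det = ∑ f : Fin n → α, (U.submatrix f id).det * ∏ i, W (f i) i := by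
    rw [det_apply']
    simp only [mul_apply, transpose_apply, prod_univ_sum, mul_sum, Fintype.piFinset_univ,
      prod_mul_distrib, ← mul_assoc]
    rw [sum_comm]
    refine sum_congr rfl fun f _ => ?_
    rw [← sum_mul, ← det_transpose, det_apply']
    rfl
  rw [expand, sum_univ_eq_sum_strictAnti_sum_perm]
  · refine sum_congr rfl fun g _ => ?_
    have hperm (σ : Equiv.Perm (Fin n)) :
        (U.submatrix (g ∘ σ) id).det = Equiv.Perm.sign σ * (U.submatrix g id).det :=
      det_permute σ (U.submatrix g id)
    simp only [hperm, mul_assoc, ← mul_sum, mul_left_comm _ (U.submatrix g id).det]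
    rw [det_apply' (W.submatrix g id)]
    rfl
  · intro f hf
    obtain ⟨i, j, hfij, hij⟩ := Function.not_injective_iff.1 hf
    rw [det_zero_of_row_eq hij (by ext; simp [hfij]), zero_mul]

theorem _root_.Finset.prod_filter_lt_eq_prod_prod_Ioi {α M : Type*} [Fintype α] [LinearOrder α]
    [LocallyFiniteOrderTop α] [CommMonoid M] (F : α → α → M) :
    ∏ p ∈ univ.filter (fun p : α × α => p.1 < p.2), F p.1 p.2 = ∏ i, ∏ j ∈ Ioi i, F i j := by
  rw [prod_filter, Fintype.prod_prod_type]
  refine prod_congr rfl fun i _ => ?_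
  rw [← prod_filter]
  congr 1
  ext j
  simp

theorem _root_.IsPrimitiveRoot.geom_sum_zpow_eq_ite {K : Type*} [Field K] {ω : K} {N : ℕ}
    (hω : IsPrimitiveRoot ω N) (m : ℤ) :
    ∑ t ∈ range N, (ω ^ m) ^ t = if (N : ℤ) ∣ m then (N : K) else 0 := by
  split_ifs with h
  · simp [(hω.zpow_eq_one_iff_dvd m).2 h]
  · have hpow : (ω ^ m) ^ N = 1 := by
      rw [← zpow_natCast, ← zpow_mul, mul_comm, zpow_mul, zpow_natCast, hω.pow_eq_one, one_zpow]
    rw [geom_sum_eq (mt (hω.zpow_eq_one_iff_dvd m).1 h), hpow, sub_self, zero_div]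

theorem _root_.Complex.normSq_exp_mul_I_sub_exp_mul_I (θ φ : ℝ) :
    normSq (exp (θ * I) - exp (φ * I)) = (2 * Real.sin ((θ - φ) / 2)) ^ 2 := by
  have h : exp (θ * I) - exp (φ * I) = exp (φ * I) * (exp (I * ↑(θ - φ)) - 1) := by
    rw [mul_sub, ← exp_add]
    push_cast
    ring_nf
  rw [h, normSq_mul, normSq_eq_norm_sq, norm_exp_ofReal_mul_I, normSq_eq_norm_sq,
    norm_exp_I_mul_ofReal_sub_one, Real.norm_eq_abs, sq_abs, one_pow, one_mul]

theorem _root_.StrictAnti.antitone_add_val {n : ℕ} {f : Fin n → ℤ} (hf : StrictAnti f) :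
    Antitone fun i => f i + i := by
  cases n with
  | zero => exact fun i => i.elim0
  | succ n =>
    refine Fin.antitone_iff_succ_le.2 fun i => ?_
    have := Fin.strictAnti_iff_succ_lt.1 hf i
    simp only [Fin.val_succ, Fin.val_castSucc, Nat.cast_add, Nat.cast_one]
    omega

def alternant {K : Type*} [Field K] {r : ℕ} (e : Fin r → ℤ) (z : Fin r → K) : K :=
  (Matrix.of fun i j => z j ^ e i).det

def staircase (r : ℕ) : Fin r → ℤ := fun i => (r : ℤ) - 1 - (i : ℕ)

theorem schur_eq_alternant_div {r : ℕ} (μ : Fin r → ℤ) (z : Fin r → ℂ) :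
    schur μ z = alternant (μ + staircase r) z / alternant (staircase r) z :=
  rfl

theorem map_alternant {K L : Type*} [Field K] [Field L] (f : K →+* L) {r : ℕ} (e : Fin r → ℤ)
    (z : Fin r → K) : f (alternant e z) = alternant e (f ∘ z) := by
  rw [alternant, RingHom.map_det]
  congr 1
  ext i j
  simp [map_zpow₀]

open Matrix in
theorem alternant_staircase_eq_prod_sub {K : Type*} [Field K] {r : ℕ} (z : Fin r → K) :
    alternant (staircase r) z =
      ∏ p ∈ univ.filter (fun p : Fin r × Fin r => p.1 < p.2), (z p.1 - z p.2) := by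
  have hrev : (of fun i j => z j ^ staircase r i).submatrix Fin.revPerm Fin.revPerm =
      (vandermonde (z ∘ Fin.rev))ᵀ := by
    ext i j
    have := i.isLt
    simp only [submatrix_apply, of_apply, Fin.revPerm_apply, transpose_apply, vandermonde_apply,
      Function.comp_apply, Fin.val_rev, staircase]
    rw [← zpow_natCast]
    congr 2
    omega
  rw [alternant, ← det_submatrix_equiv_self Fin.revPerm, hrev, det_transpose, det_vandermonde,
    ← prod_filter_lt_eq_prod_prod_Ioi (fun i j => (z ∘ Fin.rev) j - (z ∘ Fin.rev) i)]
  refine prod_nbij' (fun p => (p.2.rev, p.1.rev)) (fun p => (p.2.rev, p.1.rev)) ?_ ?_ ?_ ?_ ?_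
    <;> simp

theorem mem_Pbar_iff {r k : ℕ} {μ : Fin r → ℤ} :
    μ ∈ Pbar r k ↔ (∀ i, 0 ≤ μ i ∧ μ i ≤ k) ∧ Antitone μ := by
  simp only [Pbar, mem_filter, mem_Icc, Pi.le_def, Pi.zero_apply, forall_and]
  rfl

theorem sum_strictAnti_eq_sum_Pbar {M : Type*} [AddCommMonoid M] (r k : ℕ)
    (F : (Fin r → ℤ) → M) :
    ∑ g ∈ univ.filter (fun g : Fin r → Fin (r + k) => StrictAnti g),
        F ((fun i => (g i : ℤ)) - staircase r) = ∑ μ ∈ Pbar r k, F μ := by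
  refine sum_bij' (fun g _ => (fun i => (g i : ℤ)) - staircase r)
    (fun μ hμ i => ⟨(μ i + staircase r i).toNat, by
      have := ((mem_Pbar_iff.1 hμ).1 i).2
      simp only [staircase]
      omega⟩) ?_ ?_ ?_ ?_ (fun _ _ => rfl)
  · intro g hg
    have hg : StrictAnti g := (mem_filter.1 hg).2
    have hanti : Antitone fun i => (g i : ℤ) + i :=
      StrictAnti.antitone_add_val fun i j hij => by exact_mod_cast Fin.lt_def.1 (hg hij)
    refine mem_Pbar_iff.2 ⟨fun i => ?_, fun i j hij => ?_⟩
    · have hi := i.isLt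
      have hlast := hanti (show i ≤ ⟨r - 1, by omega⟩ from Fin.le_def.2 (by dsimp only; omega))
      have hfirst := hanti (show ⟨0, by omega⟩ ≤ i from Fin.le_def.2 (by simp))
      have := (g ⟨0, by omega⟩).isLt
      simp only [Pi.sub_apply, staircase] at *
      omega
    · have := hanti hij
      simp only [Pi.sub_apply, staircase] at *
      omega
  · intro μ hμ
    obtain ⟨hbd, hanti⟩ := mem_Pbar_iff.1 hμ
    simp only [mem_filter, mem_univ, true_and]
    intro i j hij
    have := hanti hij.le
    have := (hbd i).1
    have := (hbd j).1
    rw [Fin.lt_def] at hij ⊢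
    simp only [staircase]
    omega
  · intro g _
    ext i
    simp
  · intro μ hμ
    ext i
    have := ((mem_Pbar_iff.1 hμ).1 i).1
    simp only [Pi.sub_apply, staircase]
    omega

open Matrix in
theorem sum_Pbar_alternant_mul_alternant {K : Type*} [Field K] (r k : ℕ) (x y : Fin r → K) :
    ∑ μ ∈ Pbar r k, alternant (μ + staircase r) x * alternant (μ + staircase r) y =
      (of fun a b => ∑ t ∈ range (r + k), (x a * y b) ^ t).det := by
  let U : Matrix (Fin (r + k)) (Fin r) K := of fun t j => x j ^ (t : ℕ)
  let W : Matrix (Fin (r + k)) (Fin r) K := of fun t j => y j ^ (t : ℕ)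
  have hgram : (of fun a b => ∑ t ∈ range (r + k), (x a * y b) ^ t) = Uᵀ * W := by
    ext a b
    simp only [U, W, of_apply, mul_apply, transpose_apply, mul_pow]
    exact (Fin.sum_univ_eq_sum_range (fun t => x a ^ t * y b ^ t) _).symm
  rw [hgram, det_transpose_mul_eq_sum_strictAnti, ← sum_strictAnti_eq_sum_Pbar r k]
  refine sum_congr rfl fun g _ => ?_
  simp only [alternant, sub_add_cancel]
  congr 2 <;> ext i j <;> simp [U, W]

theorem zeta_eq_zpow (r k : ℕ) (v : Fin r → ℤ) (j : Fin r) :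
    zeta r k v j = exp (2 * Real.pi * I / (r + k : ℕ)) ^ v j := by
  rw [zeta, ← exp_int_mul]
  congr 1
  push_cast
  ring

theorem zeta_eq_exp_mul_I (r k : ℕ) (v : Fin r → ℤ) (j : Fin r) :
    zeta r k v j = exp (↑(2 * Real.pi * v j / (r + k) : ℝ) * I) := by
  rw [zeta]
  congr 1
  push_cast
  ring

theorem alternant_staircase_zeta_mul_conj (r k : ℕ) (v : Fin r → ℤ) :
    alternant (staircase r) (zeta r k v) * conj (alternant (staircase r) (zeta r k v)) =
      Dv r k v := by
  rw [alternant_staircase_eq_prod_sub, map_prod, ← prod_mul_distrib, Dv, ofReal_prod]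
  refine prod_congr rfl fun p _ => ?_
  rw [mul_conj, zeta_eq_exp_mul_I, zeta_eq_exp_mul_I, normSq_exp_mul_I_sub_exp_mul_I]
  congr 4
  ring

theorem gram_zeta_eq_diagonal {r k : ℕ} (hrk : r + k ≠ 0) {v : Fin r → ℤ} (hv : StrictAnti v)
    (hlow : ∀ i, 0 ≤ v i) (hhigh : ∀ i, v i < (r : ℤ) + (k : ℤ)) :
    (Matrix.of fun a b => ∑ t ∈ range (r + k), (zeta r k v a * conj (zeta r k v b)) ^ t) =
      Matrix.diagonal fun _ => ((r + k : ℕ) : ℂ) := by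
  have hω := isPrimitiveRoot_exp (r + k) hrk
  have hconj (b : Fin r) : conj (zeta r k v b) = exp (2 * Real.pi * I / (r + k : ℕ)) ^ (-v b) := by
    rw [zeta_eq_zpow, map_zpow₀, ← inv_eq_conj (hω.norm'_eq_one hrk), zpow_neg, inv_zpow]
  have hdvd (a b : Fin r) : ((r + k : ℕ) : ℤ) ∣ v a - v b ↔ a = b := by
    refine ⟨fun h => hv.injective ?_, fun h => by simp [h]⟩
    have := Int.eq_zero_of_abs_lt_dvd h (abs_sub_lt_iff.2 (by
      have := hlow a; have := hlow b; have := hhigh a; have := hhigh b; push_cast; omega))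
    omega
  ext a b
  rw [Matrix.of_apply, zeta_eq_zpow, hconj, ← zpow_add₀ (hω.ne_zero hrk),
    hω.geom_sum_zpow_eq_ite, ← sub_eq_add_neg]
  simp only [hdvd, Matrix.diagonal_apply]

theorem sum_Pbar_alternant_zeta_mul_conj {r k : ℕ} (hrk : r + k ≠ 0) {v : Fin r → ℤ}
    (hv : StrictAnti v) (hlow : ∀ i, 0 ≤ v i) (hhigh : ∀ i, v i < (r : ℤ) + (k : ℤ)) :
    ∑ μ ∈ Pbar r k, alternant (μ + staircase r) (zeta r k v) *
        conj (alternant (μ + staircase r) (zeta r k v)) = ((r : ℂ) + k) ^ r := by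
  simp only [map_alternant]
  rw [sum_Pbar_alternant_mul_alternant, Function.comp_def, gram_zeta_eq_diagonal hrk hv hlow hhigh,
    Matrix.det_diagonal, prod_const, card_univ, Fintype.card_fin]
  push_cast
  rfl

theorem sum_Pbar_schur_normSq_general (r k : ℕ) (hr : 1 ≤ r)
    (v : Fin r → ℤ) (hdec : ∀ i j : Fin r, i < j → v j < v i)
    (hlow : ∀ i, 0 ≤ v i) (hhigh : ∀ i, v i < (r : ℤ) + (k : ℤ)) :
    ∑ μ ∈ Pbar r k, schur μ (zeta r k v) * (starRingEnd ℂ) (schur μ (zeta r k v)) =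
      ((r : ℂ) + (k : ℂ)) ^ r / ((Dv r k v : ℝ) : ℂ) := by
  simp only [schur_eq_alternant_div, map_div₀, div_mul_div_comm, ← sum_div,
    alternant_staircase_zeta_mul_conj]
  rw [sum_Pbar_alternant_zeta_mul_conj (by omega) hdec hlow hhigh]

/-- `Σ_{μ∈P̄_k} S_μ(ζ_v)·conj(S_μ(ζ_v)) = (r+k)^r / D(v)`. -/
theorem sum_Pbar_schur_normSq (r k : ℕ) (hr : 1 ≤ r) (hk : 1 ≤ k)
    (v : Fin r → ℤ) (hdec : ∀ i j : Fin r, i < j → v j < v i)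
    (hlow : ∀ i, 0 ≤ v i) (hhigh : ∀ i, v i < (r : ℤ) + (k : ℤ)) :
    ∑ μ ∈ Pbar r k, schur μ (zeta r k v) * (starRingEnd ℂ) (schur μ (zeta r k v)) =
      ((r : ℂ) + (k : ℂ)) ^ r / ((Dv r k v : ℝ) : ℂ) :=
  sum_Pbar_schur_normSq_general r k hr v hdec hlow hhigh

end VerlindePaper
end
end

section
/- For every μ ∈ P̄_k and every integer vector v = (v_1,…,v_r) whose entries are pairwise distinct modulo r+k, one has S_{μ*}(ζ_v) = conj(S_μ(ζ_v)) · exp(2πik|v|/(r+k)). -/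
/-!
Reversing the rows of the Vandermonde-type matrix `(z_j^{μ_i+r-i})` and conjugating, which on the
unit circle inverts each `z_j`, turns the exponents of `μ*` into those of `μ` negated and shifted
by `k + r - 1` in every column; the shift pulls out as `∏ z_j^{k+r-1}`. The same computation for
the denominator produces `∏ z_j^{r-1}` and the same reversal sign, so the quotient is
`∏ z_j^k · conj S_μ(z)`, and `∏ ζ_{v,j}^k = exp(2πik|v|/(r+k))`.
-/

open scoped BigOperators
open Complex

noncomputable section

namespace VerlindePaper

open scoped ComplexConjugate

section ZpowMatrix

variable {K ι : Type*} [Field K] [Fintype ι] [DecidableEq ι]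

def zpowMatrix (z : ι → K) (e : ι → ℤ) : Matrix ι ι K := Matrix.of fun i j => z j ^ e i

theorem det_zpowMatrix_sub_comp_perm {z : ι → K} (hz : ∀ j, z j ≠ 0) (c : ℤ) (e : ι → ℤ)
    (σ : Equiv.Perm ι) :
    (zpowMatrix z fun i => c - e (σ i)).det =
      Equiv.Perm.sign σ * (∏ j, z j ^ c) * (zpowMatrix z (-e)).det := by
  have hfactor : zpowMatrix z (fun i => c - e (σ i)) =
      Matrix.of fun i j => z j ^ c * (zpowMatrix z (-e)).submatrix σ id i j := by
    ext i j
    simp [zpowMatrix, sub_eq_add_neg, zpow_add₀ (hz j)]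
  rw [hfactor, Matrix.det_mul_row, Matrix.det_permute]
  ring

theorem conj_det_zpowMatrix {z : ι → ℂ} (hz : ∀ j, ‖z j‖ = 1) (e : ι → ℤ) :
    conj (zpowMatrix z e).det = (zpowMatrix z (-e)).det := by
  rw [RingHom.map_det]
  congr 1
  ext i j
  simp [zpowMatrix, ← inv_eq_conj (hz j)]

end ZpowMatrix

theorem schur_mustar_of_norm_eq_one {r : ℕ} (k : ℕ) (lam : Fin r → ℤ) {z : Fin r → ℂ}
    (hz : ∀ j, ‖z j‖ = 1) :
    schur (mustar k lam) z = (∏ j, z j ^ (k : ℤ)) * conj (schur lam z) := by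
  have hz0 (j : Fin r) : z j ≠ 0 := ne_zero_of_norm_ne_zero (by simp [hz j])
  set ε : ℂ := ((Equiv.Perm.sign (Fin.revPerm : Equiv.Perm (Fin r)) : ℤ) : ℂ)
  have hε : ε ≠ 0 := Int.cast_ne_zero.mpr (Units.ne_zero _)
  set ρ : Fin r → ℤ := fun i => (r : ℤ) - 1 - (i : ℕ)
  have hρ_rev (i : Fin r) : ρ i.rev = (i : ℕ) := by simp only [ρ, Fin.val_rev]; omega
  have hnum : (zpowMatrix z fun i => mustar k lam i + ρ i).det =
      ε * (∏ j, z j ^ ((k : ℤ) + (r - 1))) * conj (zpowMatrix z (lam + ρ)).det := by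
    rw [conj_det_zpowMatrix hz, ← det_zpowMatrix_sub_comp_perm hz0]
    congr 2
    ext i
    simp only [mustar, Pi.add_apply, Fin.revPerm_apply, hρ_rev]
    simp only [ρ]
    ring
  have hden :
      (zpowMatrix z ρ).det = ε * (∏ j, z j ^ ((r : ℤ) - 1)) * conj (zpowMatrix z ρ).det := by
    rw [conj_det_zpowMatrix hz, ← det_zpowMatrix_sub_comp_perm hz0]
    congr 2
    ext i
    simp only [Fin.revPerm_apply, hρ_rev]
    simp only [ρ]
  have hprod :
      ∏ j, z j ^ ((k : ℤ) + (r - 1)) = (∏ j, z j ^ (k : ℤ)) * ∏ j, z j ^ ((r : ℤ) - 1) := by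
    rw [← Finset.prod_mul_distrib]
    exact Finset.prod_congr rfl fun j _ => zpow_add₀ (hz0 j) _ _
  have hprod0 : ∏ j, z j ^ ((r : ℤ) - 1) ≠ 0 :=
    Finset.prod_ne_zero_iff.mpr fun j _ => zpow_ne_zero _ (hz0 j)
  change (zpowMatrix z fun i => mustar k lam i + ρ i).det / (zpowMatrix z ρ).det =
    _ * conj ((zpowMatrix z (lam + ρ)).det / (zpowMatrix z ρ).det)
  rw [hnum, hprod, map_div₀]
  nth_rw 1 [hden]
  rw [mul_comm (∏ j, z j ^ (k : ℤ)), ← mul_assoc, mul_assoc,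
    mul_div_mul_left _ _ (mul_ne_zero hε hprod0), mul_div_assoc]

theorem norm_zeta (r k : ℕ) (v : Fin r → ℤ) (j : Fin r) : ‖zeta r k v j‖ = 1 := by
  have harg : 2 * (Real.pi : ℂ) * I * (v j : ℂ) / ((r : ℂ) + (k : ℂ)) =
      ((2 * Real.pi * v j / (r + k) : ℝ) : ℂ) * I := by
    push_cast
    ring
  rw [zeta, harg, norm_exp_ofReal_mul_I]

theorem prod_zeta_pow (r k : ℕ) (v : Fin r → ℤ) (m : ℕ) :
    ∏ j, zeta r k v j ^ (m : ℤ) =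
      exp (2 * (Real.pi : ℂ) * I * (m : ℂ) * (∑ i, (v i : ℂ)) / ((r : ℂ) + (k : ℂ))) := by
  simp only [zpow_natCast, zeta, ← exp_nat_mul, ← exp_sum]
  congr 1
  rw [Finset.mul_sum, Finset.sum_div]
  exact Finset.sum_congr rfl fun j _ => by ring

theorem schur_star_eq_conj_mul_exp_general (r k : ℕ)
    (μ : Fin r → ℤ) (v : Fin r → ℤ) :
    schur (mustar k μ) (zeta r k v) =
      (starRingEnd ℂ) (schur μ (zeta r k v)) *
        Complex.exp (2 * (Real.pi : ℂ) * Complex.I * (k : ℂ) * (∑ i, (v i : ℂ)) /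
          ((r : ℂ) + (k : ℂ))) := by
  rw [schur_mustar_of_norm_eq_one k μ (norm_zeta r k v), prod_zeta_pow, mul_comm]

/-- `S_{μ*}(ζ_v) = conj(S_μ(ζ_v)) · e^{2πik|v|/(r+k)}`. -/
theorem schur_star_eq_conj_mul_exp (r k : ℕ) (hr : 1 ≤ r) (hk : 1 ≤ k)
    (μ : Fin r → ℤ) (hμ : μ ∈ Pbar r k) (v : Fin r → ℤ)
    (hdist : ∀ i j : Fin r, i ≠ j → ¬ (((r : ℤ) + (k : ℤ)) ∣ (v i - v j))) :
    schur (mustar k μ) (zeta r k v) =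
      (starRingEnd ℂ) (schur μ (zeta r k v)) *
        Complex.exp (2 * (Real.pi : ℂ) * Complex.I * (k : ℂ) * (∑ i, (v i : ℂ)) /
          ((r : ℂ) + (k : ℂ))) :=
  schur_star_eq_conj_mul_exp_general r k μ v
end VerlindePaper
end
end
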